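/- arXiv:1604.00636 — 6 statements merged into one kernel-verified Lean document; each statement's English description precedes it below -/
import Mathlib

section
/- Let X ~ Exp(mean p₀) and Y₁,...,Y_n independent with Y_i ~ Exp(mean p_i), all independent of X, and σ² > 0. Then for x ≥ 0, P[X/(∑_i Y_i + σ²) ≤ x] = 1 − e^{−xσ²/p₀} ∏_{i=1}^n a_i/(a_i + x), where a_i = p₀/p_i. -/
open MeasureTheory ProbabilityTheory Real Finset

/-!
Given the interference `S = ∑ Yᵢ`, the exponential tail of `X` yields
`P[X > x (S + σ²)] = 𝔼[exp (-x (S + σ²) / p₀)]`. By independence this expectation factors as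
`exp (-x σ² / p₀)` times the moment generating functions of the `Yᵢ` at `-x / p₀`, and an
`Exp(λ)` variable has moment generating function `λ / (λ - t)` for `t < λ`.
-/

namespace ProbabilityTheory

lemma expMeasure_eq_withDensity (r : ℝ) : expMeasure r = volume.withDensity (exponentialPDF r) :=
  rfl

lemma ae_nonneg_expMeasure (r : ℝ) : ∀ᵐ y ∂expMeasure r, 0 ≤ y := by
  have h : expMeasure r (Set.Iio 0) = 0 := by
    rw [expMeasure_eq_withDensity, withDensity_apply _ measurableSet_Iio]
    exact lintegral_exponentialPDF_of_nonpos le_rfl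
  filter_upwards [measure_eq_zero_iff_ae_notMem.mp h] with y hy
  simpa using hy

lemma expMeasure_Ioi {r z : ℝ} (hr : 0 < r) (hz : 0 ≤ z) :
    expMeasure r (Set.Ioi z) = ENNReal.ofReal (exp (-r * z)) := by
  have := isProbabilityMeasure_expMeasure hr
  have he : exp (-(r * z)) ≤ 1 := exp_le_one_iff.2 (by nlinarith)
  rw [neg_mul, ← Set.compl_Iic, prob_compl_eq_one_sub measurableSet_Iic, ← ofReal_cdf,
    cdf_expMeasure_eq hr, if_pos hz, ← ENNReal.ofReal_one,
    ← ENNReal.ofReal_sub _ (sub_nonneg.2 he), sub_sub_cancel]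

lemma mgf_id_expMeasure {r t : ℝ} (hr : 0 < r) (ht : t < r) :
    mgf id (expMeasure r) t = r / (r - t) := by
  have hrt : 0 < r - t := sub_pos.2 ht
  have hdensity : ∀ y, exponentialPDF r y * ENNReal.ofReal (exp (t * y))
      = ENNReal.ofReal (r / (r - t)) * exponentialPDF (r - t) y := by
    intro y
    simp only [exponentialPDF_eq]
    rw [← ENNReal.ofReal_mul (by split_ifs <;> positivity),
      ← ENNReal.ofReal_mul (by positivity)]
    split_ifs
    · congr 1
      rw [show -((r - t) * y) = -(r * y) + t * y by ring, exp_add]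
      field_simp
    · simp
  have hlintegral : ∫⁻ y, ENNReal.ofReal (exp (t * y)) ∂expMeasure r
      = ENNReal.ofReal (r / (r - t)) := by
    rw [expMeasure_eq_withDensity, lintegral_withDensity_eq_lintegral_mul (f := exponentialPDF r) _
      (measurable_exponentialPDFReal r).ennreal_ofReal (by fun_prop)]
    simp only [Pi.mul_apply, hdensity]
    rw [lintegral_const_mul (f := exponentialPDF (r - t)) _
      (measurable_exponentialPDFReal _).ennreal_ofReal,
      lintegral_exponentialPDF_eq_one hrt, mul_one]
  rw [mgf, integral_eq_lintegral_of_nonneg_ae (.of_forall fun _ => (exp_pos _).le)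
    (by fun_prop)]
  simp only [id, hlintegral]
  exact ENNReal.toReal_ofReal (by positivity)

lemma ae_nonneg_of_map_eq_expMeasure {Ω : Type*} [MeasurableSpace Ω] {P : Measure Ω}
    {X : Ω → ℝ} {r : ℝ} (hX : Measurable X) (hXd : P.map X = expMeasure r) :
    ∀ᵐ ω ∂P, 0 ≤ X ω :=
  ae_of_ae_map hX.aemeasurable (hXd ▸ ae_nonneg_expMeasure r)

lemma iIndepFun.mgf_sum_of_map_eq_expMeasure {Ω ι : Type*}
    [MeasurableSpace Ω] {P : Measure Ω} {Y : ι → Ω → ℝ} {r : ι → ℝ} {t : ℝ}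
    (hY_indep : iIndepFun Y P) (hY : ∀ i, Measurable (Y i)) (hr : ∀ i, 0 < r i)
    (hYd : ∀ i, P.map (Y i) = expMeasure (r i)) (ht : ∀ i, t < r i) (s : Finset ι) :
    mgf (∑ i ∈ s, Y i) P t = ∏ i ∈ s, r i / (r i - t) := by
  rw [hY_indep.mgf_sum hY]
  refine prod_congr rfl fun i _ => ?_
  rw [← mgf_id_map (hY i).aemeasurable, hYd, mgf_id_expMeasure (hr i) (ht i)]

section Independent

variable {Ω : Type*} [MeasurableSpace Ω] {P : Measure Ω} [IsProbabilityMeasure P] {X Z : Ω → ℝ}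

lemma IndepFun.measure_lt_eq_lintegral (hZX : IndepFun Z X P) (hZ : Measurable Z)
    (hX : Measurable X) :
    P {ω | Z ω < X ω} = ∫⁻ z, P.map X (Set.Ioi z) ∂P.map Z := by
  have hlt : MeasurableSet {q : ℝ × ℝ | q.1 < q.2} := measurableSet_lt measurable_fst measurable_snd
  rw [← Set.preimage_ofPred_eq (p := fun q : ℝ × ℝ => q.1 < q.2) (f := fun ω => (Z ω, X ω)),
    ← Measure.map_apply (hZ.prodMk hX) hlt,
    (indepFun_iff_map_prod_eq_prod_map_map hZ.aemeasurable hX.aemeasurable).1 hZX,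
    Measure.prod_apply hlt]
  rfl

lemma IndepFun.measure_lt_of_map_eq_expMeasure {r : ℝ} (hr : 0 < r)
    (hZX : IndepFun Z X P) (hZ : Measurable Z) (hX : Measurable X) (hXd : P.map X = expMeasure r)
    (hZ0 : ∀ᵐ ω ∂P, 0 ≤ Z ω) :
    P {ω | Z ω < X ω} = ENNReal.ofReal (mgf Z P (-r)) := by
  have hbound : ∀ᵐ ω ∂P, ‖exp (-r * Z ω)‖ ≤ 1 := by
    filter_upwards [hZ0] with ω hω
    rw [norm_of_nonneg (exp_pos _).le, exp_le_one_iff]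
    nlinarith
  rw [hZX.measure_lt_eq_lintegral hZ hX, hXd, mgf,
    ofReal_integral_eq_lintegral_ofReal
      (.of_bound (by fun_prop) 1 hbound) (.of_forall fun _ => (exp_pos _).le),
    ← lintegral_map (f := fun z => ENNReal.ofReal (exp (-r * z))) (by fun_prop) hZ]
  apply lintegral_congr_ae
  filter_upwards [(ae_map_iff hZ.aemeasurable measurableSet_Ici).2 hZ0] with z hz
  exact expMeasure_Ioi hr hz

lemma IndepFun.measure_div_add_le_of_map_eq_expMeasure {S : Ω → ℝ}
    {r c x : ℝ} (hr : 0 < r) (hc : 0 < c) (hx : 0 ≤ x) (hSX : IndepFun S X P)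
    (hS : Measurable S) (hX : Measurable X) (hXd : P.map X = expMeasure r)
    (hS0 : ∀ᵐ ω ∂P, 0 ≤ S ω) :
    P {ω | X ω / (S ω + c) ≤ x} = ENNReal.ofReal (1 - exp (-r * x * c) * mgf S P (-r * x)) := by
  set Z : Ω → ℝ := fun ω => x * (S ω + c)
  have hZ : Measurable Z := (hS.add_const c).const_mul x
  have hZ0 : ∀ᵐ ω ∂P, 0 ≤ Z ω := by
    filter_upwards [hS0] with ω hω
    exact mul_nonneg hx (by linarith)
  have hZX : IndepFun Z X P := hSX.comp (φ := fun s => x * (s + c)) (by fun_prop) measurable_id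
  have hevent : {ω | X ω / (S ω + c) ≤ x} =ᵐ[P] ({ω | Z ω < X ω}ᶜ : Set Ω) := by
    rw [Filter.eventuallyEq_set]
    filter_upwards [hS0] with ω hω
    simp only [Z, Set.mem_ofPred_eq, Set.mem_compl_iff, not_lt]
    exact div_le_iff₀ (by positivity)
  have hmgf : mgf Z P (-r) = exp (-r * x * c) * mgf S P (-r * x) := by
    rw [mgf_const_mul, mgf_add_const, mul_comm, mul_comm x, mul_assoc]
  rw [measure_congr hevent, prob_compl_eq_one_sub (measurableSet_lt hZ hX),
    hZX.measure_lt_of_map_eq_expMeasure hr hZ hX hXd hZ0, ← ENNReal.ofReal_one,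
    ← ENNReal.ofReal_sub _ mgf_nonneg, hmgf]

end Independent

end ProbabilityTheory

theorem sinr_cdf_many_interferers
    {Ω : Type*} [MeasurableSpace Ω] (P : Measure Ω) [IsProbabilityMeasure P]
    (n : ℕ) (f : Fin (n + 1) → Ω → ℝ) (hf : ∀ i, Measurable (f i))
    (p₀ : ℝ) (p : Fin n → ℝ) (σ2 : ℝ)
    (hp₀ : 0 < p₀) (hp : ∀ i, 0 < p i) (hσ : 0 < σ2)
    (hXd : Measure.map (f 0) P = expMeasure (1 / p₀))
    (hYd : ∀ i : Fin n, Measure.map (f i.succ) P = expMeasure (1 / p i))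
    (hindep : iIndepFun f P)
    (x : ℝ) (hx : 0 ≤ x) :
    P {ω | f 0 ω / ((∑ i : Fin n, f i.succ ω) + σ2) ≤ x}
      = ENNReal.ofReal
          (1 - Real.exp (-x * σ2 / p₀) * ∏ i : Fin n, (p₀ / p i) / (p₀ / p i + x)) := by
  set S : Ω → ℝ := ∑ i : Fin n, f i.succ with hS_def
  have hS : Measurable S := by
    rw [hS_def, Finset.sum_fn]
    exact Finset.measurable_sum _ fun i _ => hf i.succ
  have hS0 : ∀ᵐ ω ∂P, 0 ≤ S ω := by
    filter_upwards [ae_all_iff.2 fun i => ae_nonneg_of_map_eq_expMeasure (hf i.succ) (hYd i)]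
      with ω hω
    simpa [S] using sum_nonneg fun i _ => hω i
  have hSX : IndepFun S (f 0) P := by
    have h := hindep.indepFun_finsetSum_of_notMem hf (s := univ.map (Fin.succEmb n)) (i := 0)
      (by simp [Fin.succ_ne_zero])
    rwa [sum_map] at h
  have hmgf := (hindep.precomp (Fin.succ_injective n)).mgf_sum_of_map_eq_expMeasure
    (fun i => hf i.succ) (fun i => one_div_pos.2 (hp i)) hYd (t := -(1 / p₀) * x)
    (fun i => by nlinarith [mul_nonneg hx (one_div_pos.2 hp₀).le, one_div_pos.2 (hp i)]) univ
  have hevent : {ω | f 0 ω / ((∑ i : Fin n, f i.succ ω) + σ2) ≤ x}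
      = {ω | f 0 ω / (S ω + σ2) ≤ x} := by
    simp only [S, Finset.sum_apply]
  rw [hevent, hSX.measure_div_add_le_of_map_eq_expMeasure (one_div_pos.2 hp₀) hσ hx hS (hf 0)
    hXd hS0, hmgf]
  congr 3
  · ring_nf
  · refine prod_congr rfl fun i _ => ?_
    have := hp i
    rw [neg_mul, sub_neg_eq_add]
    field_simp
end

section
/- For real s, a > 2, γ > 0, and 0 < δ < a − 2: ∫_1^{a−1−δ} z^{s-2}/(z + a − 1) · e^{-z/γ} dz = ∑_{n=0}^∞ ((−1)^n γ^{s+n−1}/(a−1)^{n+1}) [Γ(s+n−1, 1/γ) − Γ(s+n−1, (a−1−δ)/γ)], where Γ(·,·) is the upper incomplete Gamma function. -/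
/-! Since `0 < z ≤ a - 1 - δ < a - 1` on the domain, `1 / (z + a - 1)` expands as a geometric
series in `-z / (a - 1)` with ratio bounded by `(a - 1 - δ) / (a - 1) < 1`, so the series of
integrals of the norms is dominated by a geometric series and summation commutes with
integration. The substitution `z = γ t` turns the `n`-th term into
`γ ^ (s + n - 1) ∫_{1/γ}^{(a-1-δ)/γ} t ^ (s + n - 2) e^(-t) dt`, a difference of two upper
incomplete Gamma values. -/

open Real MeasureTheory Set

/-- Upper incomplete Gamma function `Γ(s, y) = ∫_y^∞ t^(s-1) e^(-t) dt`. -/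
noncomputable def upperIncGamma (s y : ℝ) : ℝ := ∫ t in Ioi y, t ^ (s - 1) * Real.exp (-t)

lemma integrableOn_rpow_mul_exp_neg_Ioi (u : ℝ) {y : ℝ} (hy : 0 < y) :
    IntegrableOn (fun t : ℝ => t ^ (u - 1) * exp (-t)) (Ioi y) := by
  simp_rw [mul_comm _ (exp _)]
  exact integrable_of_isBigO_exp_neg one_half_pos
    (continuousOn_id.neg.rexp.mul
      (continuousOn_id.rpow_const fun t ht => Or.inl (hy.trans_le ht).ne'))
    (Gamma_integrand_isLittleO _).isBigO

lemma upperIncGamma_sub_upperIncGamma (u : ℝ) {x y : ℝ} (hx : 0 < x) (hxy : x ≤ y) :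
    upperIncGamma u x - upperIncGamma u y = ∫ t in Ioc x y, t ^ (u - 1) * exp (-t) := by
  have hx_int := integrableOn_rpow_mul_exp_neg_Ioi u hx
  rw [sub_eq_iff_eq_add, upperIncGamma, upperIncGamma, ← Ioc_union_Ioi_eq_Ioi hxy,
    setIntegral_union (Ioc_disjoint_Ioi le_rfl) measurableSet_Ioi
      (hx_int.mono_set Ioc_subset_Ioi_self) (hx_int.mono_set (Ioi_subset_Ioi hxy))]

lemma integral_Ioc_rpow_mul_exp_neg_div (u : ℝ) {γ x y : ℝ} (hγ : 0 < γ) (hx : 0 < x)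
    (hxy : x ≤ y) :
    ∫ z in Ioc x y, z ^ (u - 1) * exp (-z / γ) =
      γ ^ u * (upperIncGamma u (x / γ) - upperIncGamma u (y / γ)) := by
  have hxy' : x / γ ≤ y / γ := div_le_div_of_nonneg_right hxy hγ.le
  have hscale : ∀ z ∈ uIcc x y,
      z ^ (u - 1) * exp (-z / γ) = γ ^ (u - 1) * ((z / γ) ^ (u - 1) * exp (-(z / γ))) := by
    intro z hz
    have hz : 0 ≤ z := hx.le.trans (uIcc_of_le hxy ▸ hz).1
    rw [div_rpow hz hγ.le, neg_div]
    field_simp [(rpow_pos_of_pos hγ (u - 1)).ne']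
  rw [upperIncGamma_sub_upperIncGamma u (div_pos hx hγ) hxy', ← intervalIntegral.integral_of_le hxy,
    ← intervalIntegral.integral_of_le hxy', intervalIntegral.integral_congr hscale,
    intervalIntegral.integral_const_mul,
    intervalIntegral.integral_comp_div (fun t => t ^ (u - 1) * exp (-t)) hγ.ne', smul_eq_mul,
    rpow_sub_one hγ.ne']
  field_simp

lemma integral_Ioc_neg_div_pow_mul_rpow_mul_exp (s γ c : ℝ) (n : ℕ) {x y : ℝ} (hγ : 0 < γ)
    (hc : c ≠ 0) (hx : 0 < x) (hxy : x ≤ y) :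
    ∫ z in Ioc x y, (-z / c) ^ n * (c⁻¹ * (z ^ (s - 2) * exp (-z / γ))) =
      (-1 : ℝ) ^ n * γ ^ (s + n - 1) / c ^ (n + 1) *
        (upperIncGamma (s + n - 1) (x / γ) - upperIncGamma (s + n - 1) (y / γ)) := by
  rw [mul_div_right_comm, mul_assoc, ← integral_Ioc_rpow_mul_exp_neg_div _ hγ hx hxy,
    ← integral_const_mul]
  refine setIntegral_congr_fun measurableSet_Ioc fun z hz => ?_
  have hz : 0 < z := hx.trans hz.1
  rw [show s + n - 1 - 1 = n + (s - 2) by ring, rpow_add hz, rpow_natCast, div_pow, neg_pow z]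
  field_simp
  ring

lemma hasSum_integral_geometric_smul {α E : Type*} [MeasurableSpace α] [NormedAddCommGroup E]
    [NormedSpace ℝ E] {μ : Measure α} {q : α → ℝ} {g : α → E} {r : ℝ} (hr₀ : 0 ≤ r) (hr₁ : r < 1)
    (hq : AEStronglyMeasurable q μ) (hqr : ∀ᵐ z ∂μ, ‖q z‖ ≤ r) (hg : Integrable g μ) :
    HasSum (fun n : ℕ => ∫ z, q z ^ n • g z ∂μ) (∫ z, (1 - q z)⁻¹ • g z ∂μ) := by
  have hpow : ∀ n : ℕ, ∀ᵐ z ∂μ, ‖q z ^ n‖ ≤ r ^ n := fun n => hqr.mono fun z hz => by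
    rw [norm_pow]; exact pow_le_pow_left₀ (norm_nonneg _) hz n
  have hint : ∀ n : ℕ, Integrable (fun z => q z ^ n • g z) μ := fun n =>
    hg.bdd_smul (r ^ n) (hq.pow n) (hpow n)
  have hbound : ∀ n : ℕ, ∫ z, ‖q z ^ n • g z‖ ∂μ ≤ r ^ n * ∫ z, ‖g z‖ ∂μ := fun n => by
    rw [← integral_const_mul]
    refine integral_mono_ae (hint n).norm (hg.norm.const_mul _) ((hpow n).mono fun z hz => ?_)
    simpa only [norm_smul] using mul_le_mul_of_nonneg_right hz (norm_nonneg (g z))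
  have hsum : Summable fun n : ℕ => ∫ z, ‖q z ^ n • g z‖ ∂μ :=
    .of_nonneg_of_le (fun n => integral_nonneg fun z => norm_nonneg _) hbound
      ((summable_geometric_of_lt_one hr₀ hr₁).mul_right _)
  have hgeom : ∀ᵐ z ∂μ, ∑' n : ℕ, q z ^ n • g z = (1 - q z)⁻¹ • g z := hqr.mono fun z hz => by
    have hz₁ : ‖q z‖ < 1 := hz.trans_lt hr₁
    rw [(summable_geometric_of_norm_lt_one hz₁).tsum_smul_const, tsum_geometric_of_norm_lt_one hz₁]
  rw [← integral_congr_ae hgeom]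
  exact hasSum_integral_of_summable_integral_norm hint hsum

theorem finite_interval_series_expansion_general (s a γ δ : ℝ) (hγ : 0 < γ)
    (hδ : 0 < δ) (hδa : δ < a - 2) :
    HasSum
      (fun n : ℕ =>
        (-1 : ℝ) ^ n * γ ^ (s + n - 1) / (a - 1) ^ (n + 1) *
          (upperIncGamma (s + n - 1) (1 / γ) - upperIncGamma (s + n - 1) ((a - 1 - δ) / γ)))
      (∫ z in Ioc (1 : ℝ) (a - 1 - δ), z ^ (s - 2) / (z + a - 1) * Real.exp (-z / γ)) := by
  set b := a - 1 - δ
  have hb : 1 < b := by linarith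
  have ha : 0 < a - 1 := by linarith
  have hratio : ∀ᵐ z ∂volume.restrict (Ioc 1 b), ‖-z / (a - 1)‖ ≤ b / (a - 1) :=
    (ae_restrict_mem measurableSet_Ioc).mono fun z hz => by
      rw [norm_div, norm_neg, norm_of_nonneg (by linarith [hz.1]), norm_of_nonneg ha.le]
      exact div_le_div_of_nonneg_right hz.2 ha.le
  have hg : IntegrableOn (fun z => (a - 1)⁻¹ * (z ^ (s - 2) * exp (-z / γ))) (Ioc 1 b) :=
    (ContinuousOn.integrableOn_Icc (continuousOn_const.mul
      ((continuousOn_id.rpow_const fun z hz => Or.inl (zero_lt_one.trans_le hz.1).ne').mul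
        (continuousOn_id.neg.div_const γ).rexp))).mono_set Ioc_subset_Icc_self
  have hlimit : ∫ z in Ioc 1 b, z ^ (s - 2) / (z + a - 1) * exp (-z / γ) =
      ∫ z in Ioc 1 b, (1 - -z / (a - 1))⁻¹ * ((a - 1)⁻¹ * (z ^ (s - 2) * exp (-z / γ))) := by
    refine setIntegral_congr_fun measurableSet_Ioc fun z hz => ?_
    have hz : z + a - 1 ≠ 0 := by linarith [hz.1]
    rw [one_sub_div ha.ne', sub_neg_eq_add, add_comm (a - 1), ← add_sub_assoc]
    field_simp
  simp_rw [← integral_Ioc_neg_div_pow_mul_rpow_mul_exp s γ (a - 1) _ hγ ha.ne' one_pos hb.le,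
    hlimit, ← smul_eq_mul]
  exact hasSum_integral_geometric_smul (div_nonneg (by linarith) ha.le)
    ((div_lt_one ha).2 (by linarith)) (by fun_prop) hratio hg

theorem finite_interval_series_expansion (s a γ δ : ℝ) (ha : 2 < a) (hγ : 0 < γ)
    (hδ : 0 < δ) (hδa : δ < a - 2) :
    HasSum
      (fun n : ℕ =>
        (-1 : ℝ) ^ n * γ ^ (s + n - 1) / (a - 1) ^ (n + 1) *
          (upperIncGamma (s + n - 1) (1 / γ) - upperIncGamma (s + n - 1) ((a - 1 - δ) / γ)))
      (∫ z in Ioc (1 : ℝ) (a - 1 - δ), z ^ (s - 2) / (z + a - 1) * Real.exp (-z / γ)) :=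
  finite_interval_series_expansion_general s a γ δ hγ hδ hδa
end

section
/- For real s, a > 0, γ > 0, and δ > 0 with M := max(1, a−1+δ): ∫_M^∞ z^{s-2}/(z + a − 1) · e^{-z/γ} dz = ∑_{n=0}^∞ (1−a)^n γ^{s−n−2} Γ(s−n−2, M/γ), where Γ(·,·) is the upper incomplete Gamma function, provided |a−1|/M < 1. -/
/-!
For `z > M > |1 - a|` the kernel `1 / (z + a - 1)` expands as `∑ (1 - a)^n z^(-n-1)`, and after
the substitution `z = γ t` the `n`-th term integrates to `γ^(s-n-2) Γ(s-n-2, M/γ)`. Termwise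
integration is legitimate because the integral of the absolute value of the `n`-th term is at most
`(|1 - a| / M)^n` times a fixed integral.
-/

open Real MeasureTheory Set

lemma hasSum_pow_mul_rpow_sub_natCast {b z : ℝ} (c : ℝ) (hb : |b| < z) :
    HasSum (fun n : ℕ => b ^ n * z ^ (c - 1 - n)) (z ^ c / (z - b)) := by
  have hz : 0 < z := (abs_nonneg b).trans_lt hb
  have hzb : z - b ≠ 0 := by linarith [le_abs_self b]
  have hr : ‖b / z‖ < 1 := by
    rwa [norm_div, Real.norm_eq_abs, Real.norm_eq_abs, abs_of_pos hz, div_lt_one hz]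
  have hterm (n : ℕ) : b ^ n * z ^ (c - 1 - n) = (b / z) ^ n * z ^ (c - 1) := by
    rw [rpow_sub_natCast hz.ne', div_pow]
    ring
  have hlimit : z ^ c / (z - b) = (1 - b / z)⁻¹ * z ^ (c - 1) := by
    rw [rpow_sub_one hz.ne']
    field_simp
  rw [funext hterm, hlimit]
  exact (hasSum_geometric_of_norm_lt_one hr).mul_right _

lemma norm_pow_mul_rpow_sub_natCast_le {b z M : ℝ} (c y : ℝ) (n : ℕ) (hM : 0 < M)
    (hz : M ≤ z) : ‖b ^ n * (z ^ (c - 1 - n) * y)‖ ≤ (|b| / M) ^ n * ‖z ^ (c - 1) * y‖ := by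
  have hz0 : 0 < z := hM.trans_le hz
  calc ‖b ^ n * (z ^ (c - 1 - n) * y)‖ = (|b| / z) ^ n * ‖z ^ (c - 1) * y‖ := by
        rw [rpow_sub_natCast hz0.ne', norm_mul, norm_mul, norm_mul, norm_div, norm_pow, norm_pow,
          Real.norm_eq_abs, Real.norm_eq_abs z, abs_of_pos hz0, div_pow]
        ring
    _ ≤ (|b| / M) ^ n * ‖z ^ (c - 1) * y‖ := by gcongr

theorem hasSum_integral_pow_mul_rpow_sub_natCast {M b c : ℝ} {w : ℝ → ℝ} (hM : 0 < M)
    (hb : |b| < M) (hw : ∀ n : ℕ, IntegrableOn (fun z => z ^ (c - 1 - n) * w z) (Ioi M)) :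
    HasSum (fun n : ℕ => b ^ n * ∫ z in Ioi M, z ^ (c - 1 - n) * w z)
      (∫ z in Ioi M, z ^ c / (z - b) * w z) := by
  have hF (n : ℕ) : IntegrableOn (fun z => b ^ n * (z ^ (c - 1 - n) * w z)) (Ioi M) :=
    (hw n).const_mul _
  have hw₀ : IntegrableOn (fun z => z ^ (c - 1) * w z) (Ioi M) := by
    simpa using hw 0
  have hbound (n : ℕ) : ∫ z in Ioi M, ‖b ^ n * (z ^ (c - 1 - n) * w z)‖ ≤
      (|b| / M) ^ n * ∫ z in Ioi M, ‖z ^ (c - 1) * w z‖ := by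
    rw [← integral_const_mul]
    exact setIntegral_mono_on (hF n).norm (hw₀.norm.const_mul _) measurableSet_Ioi
      fun z hz => norm_pow_mul_rpow_sub_natCast_le c (w z) n hM (le_of_lt hz)
  have hsum : Summable fun n : ℕ => ∫ z in Ioi M, ‖b ^ n * (z ^ (c - 1 - n) * w z)‖ :=
    .of_nonneg_of_le (fun n => integral_nonneg fun _ => norm_nonneg _) hbound <|
      (summable_geometric_of_lt_one (by positivity : 0 ≤ |b| / M)
        ((div_lt_one hM).2 hb)).mul_right _
  have H := hasSum_integral_of_summable_integral_norm hF hsum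
  simp only [integral_const_mul] at H
  have hpointwise : ∫ z in Ioi M, ∑' n : ℕ, b ^ n * (z ^ (c - 1 - n) * w z) =
      ∫ z in Ioi M, z ^ c / (z - b) * w z := by
    refine setIntegral_congr_fun measurableSet_Ioi fun z hz => ?_
    simp only [← mul_assoc]
    exact ((hasSum_pow_mul_rpow_sub_natCast c (lt_trans hb hz)).mul_right (w z)).tsum_eq
  rwa [hpointwise] at H

lemma integrableOn_rpow_mul_exp_neg_div_Ioi (c : ℝ) {M γ : ℝ} (hM : 0 < M) (hγ : 0 < γ) :
    IntegrableOn (fun z : ℝ => z ^ c * exp (-z / γ)) (Ioi M) := by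
  refine integrable_of_isBigO_exp_neg (b := (2 * γ)⁻¹) (by positivity) ?_ ?_
  · exact ContinuousOn.mul
      (fun z hz => (continuousAt_rpow_const z c (.inl (hM.trans_le hz).ne')).continuousWithinAt)
      (by fun_prop)
  · have hsplit : (fun z : ℝ => exp (-(2 * γ)⁻¹ * z)) =
        fun z => exp ((2 * γ)⁻¹ * z) * exp (-z / γ) := by
      funext z
      rw [← exp_add]
      congr 1
      field_simp
      ring
    rw [hsplit]
    exact (isLittleO_rpow_exp_pos_mul_atTop c (by positivity)).isBigO.mul
      (Asymptotics.isBigO_refl _ _)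

lemma integral_rpow_mul_exp_neg_div_Ioi (c : ℝ) {M γ : ℝ} (hM : 0 ≤ M) (hγ : 0 < γ) :
    ∫ z in Ioi M, z ^ (c - 1) * exp (-z / γ) = γ ^ c * upperIncGamma c (M / γ) := by
  have hscale : ∀ z ∈ Ioi M, z ^ (c - 1) * exp (-z / γ) =
      γ ^ (c - 1) * ((γ⁻¹ * z) ^ (c - 1) * exp (-(γ⁻¹ * z))) := by
    intro z hz
    rw [mul_rpow (inv_nonneg.2 hγ.le) (hM.trans (le_of_lt hz)), inv_rpow hγ.le]
    field_simp
  rw [setIntegral_congr_fun measurableSet_Ioi hscale, integral_const_mul,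
    integral_comp_mul_left_Ioi (fun t => t ^ (c - 1) * exp (-t)) M (inv_pos.2 hγ), inv_inv,
    smul_eq_mul, ← mul_assoc, ← rpow_add_one hγ.ne', sub_add_cancel, inv_mul_eq_div,
    upperIncGamma]

theorem tail_integral_series_expansion_general (s a γ δ : ℝ) (hγ : 0 < γ)
    (hconv : |a - 1| / max 1 (a - 1 + δ) < 1) :
    HasSum
      (fun n : ℕ =>
        (1 - a) ^ n * γ ^ (s - n - 2) * upperIncGamma (s - n - 2) (max 1 (a - 1 + δ) / γ))
      (∫ z in Ioi (max 1 (a - 1 + δ)), z ^ (s - 2) / (z + a - 1) * Real.exp (-z / γ)) := by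
  set M := max 1 (a - 1 + δ)
  have hM : 0 < M := one_pos.trans_le (le_max_left _ _)
  have hb : |1 - a| < M := by rwa [abs_sub_comm, ← div_lt_one hM]
  have H := hasSum_integral_pow_mul_rpow_sub_natCast (c := s - 2) hM hb
    fun n => integrableOn_rpow_mul_exp_neg_div_Ioi _ hM hγ
  have hterm (n : ℕ) : ∫ z in Ioi M, z ^ (s - 2 - 1 - n) * exp (-z / γ) =
      γ ^ (s - n - 2) * upperIncGamma (s - n - 2) (M / γ) := by
    rw [show s - 2 - 1 - (n : ℝ) = s - n - 2 - 1 by ring,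
      integral_rpow_mul_exp_neg_div_Ioi _ hM.le hγ]
  simpa only [hterm, sub_sub_eq_add_sub, ← mul_assoc] using H

theorem tail_integral_series_expansion (s a γ δ : ℝ) (ha : 0 < a) (hγ : 0 < γ) (hδ : 0 < δ)
    (hconv : |a - 1| / max 1 (a - 1 + δ) < 1) :
    HasSum
      (fun n : ℕ =>
        (1 - a) ^ n * γ ^ (s - n - 2) * upperIncGamma (s - n - 2) (max 1 (a - 1 + δ) / γ))
      (∫ z in Ioi (max 1 (a - 1 + δ)), z ^ (s - 2) / (z + a - 1) * Real.exp (-z / γ)) :=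
  tail_integral_series_expansion_general s a γ δ hγ hconv
end

section
/- For a > 1, γ > 0, even k ≥ 0, and s < 1, the truncated sums satisfy Ψ^{k+1}(s) ≤ ∫_0^∞ (1+x)^{s−2}/(a+x) · e^{−x/γ} dx ≤ Ψ^k(s), where Ψ^k(s) is obtained by truncating the alternating series representation (from the expansions of the integral in terms of incomplete Gamma functions) at index k, in the limit δ → 0. -/
open Real MeasureTheory Set Finset

/-- The truncated series `Ψ^k(s)` from the paper's Corollary 1, in the limit `δ → 0`:
`Ψ^k(s) = e^(1/γ) (I₁^k(s) + I₂^k(s))` where the middle term `I_δ(s)` vanishes as `δ → 0`. -/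
noncomputable def Psi (a γ s : ℝ) (k : ℕ) : ℝ :=
  Real.exp (1 / γ) *
    ((if 2 < a then
        ∑ n ∈ range (k + 1),
          (-1 : ℝ) ^ n * γ ^ (s + n - 1) / (a - 1) ^ (n + 1) *
            (upperIncGamma (s + n - 1) (1 / γ) - upperIncGamma (s + n - 1) ((a - 1) / γ))
      else 0)
      + ∑ n ∈ range (k + 1),
          (1 - a) ^ n * γ ^ (s - n - 2) * upperIncGamma (s - n - 2) (max 1 (a - 1) / γ))

/-!
Write `1 / (a + x) = 1 / (A + B)` with `A = max (1 + x) (a - 1)` and `B = min (1 + x) (a - 1)`.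
Since `A > 0` and `B ≥ 0`, the partial sums
`∑_{n<N} (-1)^n B^n / A^(n+1) = (1 - (-B/A)^N) / (A + B)` lie above `1 / (A + B)` for odd `N`
and below it for even `N`. Multiplying by the positive weight `(1 + x)^(s-2) e^(-x/γ)` and
integrating gives the bounds, because `Ψ^k(s)` is the integral of the truncation with `k + 1`
terms: on `x > max 1 (a - 1) - 1` each term is a multiple of `(1 + x)^(c-1) e^(-x/γ)`, which the
substitution `t = (1 + x)/γ` turns into `e^(1/γ) γ^c Γ(c, max 1 (a - 1) / γ)`, and for `a > 2`
the range `0 < x ≤ a - 2` contributes the differences `Γ(c, 1/γ) - Γ(c, (a - 1)/γ)`.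
-/

open Filter Asymptotics

noncomputable def altGeomSum (A B : ℝ) (N : ℕ) : ℝ :=
  ∑ n ∈ range N, (-1 : ℝ) ^ n * B ^ n / A ^ (n + 1)

theorem altGeomSum_eq {A B : ℝ} (hA : A ≠ 0) (hAB : A + B ≠ 0) (N : ℕ) :
    altGeomSum A B N = (1 - (-(B / A)) ^ N) / (A + B) := by
  rw [eq_div_iff hAB, ← mul_neg_geom_sum, altGeomSum, mul_comm, Finset.mul_sum, Finset.mul_sum]
  refine Finset.sum_congr rfl fun n _ => ?_
  rw [neg_pow (B / A), div_pow]
  field_simp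
  ring

theorem altGeomSum_le_one_div_add {A B : ℝ} (hA : 0 < A) (hB : 0 ≤ B) {N : ℕ} (hN : Even N) :
    altGeomSum A B N ≤ 1 / (A + B) := by
  rw [altGeomSum_eq hA.ne' (by positivity)]
  exact div_le_div_of_nonneg_right (by linarith [hN.pow_nonneg (-(B / A))]) (by positivity)

theorem one_div_add_le_altGeomSum {A B : ℝ} (hA : 0 < A) (hB : 0 ≤ B) {N : ℕ} (hN : Odd N) :
    1 / (A + B) ≤ altGeomSum A B N := by
  rw [altGeomSum_eq hA.ne' (by positivity)]
  have : (-(B / A)) ^ N ≤ 0 := hN.pow_nonpos (neg_nonpos.2 (by positivity))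
  exact div_le_div_of_nonneg_right (by linarith) (by positivity)

theorem integrableOn_Ioi_add_rpow_mul_exp_neg_mul (c : ℝ) {b d y : ℝ} (hb : 0 < b)
    (hy : 0 < d + y) : IntegrableOn (fun x => (d + x) ^ c * exp (-b * x)) (Ioi y) := by
  refine integrable_of_isBigO_exp_neg (half_pos hb) ?_ ?_
  · have : ∀ x ∈ Ici y, d + x ≠ 0 := fun x hx => by linarith [mem_Ici.1 hx]
    fun_prop (disch := assumption)
  · have hrpow : (fun x => (d + x) ^ c) =o[atTop] fun x => exp (b / 2 * (d + x)) :=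
      (isLittleO_rpow_exp_pos_mul_atTop c (half_pos hb)).comp_tendsto
        (tendsto_atTop_add_const_left _ d tendsto_id)
    have hexp : (fun x => exp (b / 2 * (d + x)) * exp (-b * x))
        = fun x => exp (b / 2 * d) * exp (-(b / 2) * x) := by
      funext x; rw [← exp_add, ← exp_add]; ring_nf
    refine (hrpow.isBigO.mul (isBigO_refl (fun x => exp (-b * x)) atTop)).trans ?_
    rw [hexp]
    exact isBigO_const_mul_self _ _ _

theorem integrableOn_Ioi_one_add_rpow_mul_exp (c : ℝ) {γ m : ℝ} (hγ : 0 < γ) (hm : -1 < m) :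
    IntegrableOn (fun x => (1 + x) ^ c * exp (-x / γ)) (Ioi m) := by
  simpa only [neg_mul, ← div_eq_inv_mul, neg_div] using
    integrableOn_Ioi_add_rpow_mul_exp_neg_mul c (inv_pos.2 hγ) (by linarith : 0 < 1 + m)

theorem setIntegral_Ioi_comp_add_right {E : Type*} [NormedAddCommGroup E] [NormedSpace ℝ E]
    (f : ℝ → E) (m d : ℝ) : ∫ x in Ioi m, f (x + d) = ∫ x in Ioi (m + d), f x := by
  have := (measurePreserving_add_right volume d).setIntegral_preimage_emb
    (measurableEmbedding_addRight d) f (Ioi (m + d))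
  rwa [preimage_add_const_Ioi, add_sub_cancel_right] at this

theorem integral_Ioi_one_add_rpow_mul_exp (c : ℝ) {γ b : ℝ} (hγ : 0 < γ) (hb : 0 < b) :
    ∫ x in Ioi (b - 1), (1 + x) ^ (c - 1) * exp (-x / γ)
      = exp (1 / γ) * γ ^ c * upperIncGamma c (b / γ) := by
  set g : ℝ → ℝ := fun t => t ^ (c - 1) * exp (-t)
  have hscale : ∀ u, 0 < u → u ^ (c - 1) * exp (-(u - 1) / γ)
      = exp (1 / γ) * γ ^ (c - 1) * g (γ⁻¹ * u) := fun u hu => by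
    have hexp : exp (-(u - 1) / γ) = exp (1 / γ) * exp (-(γ⁻¹ * u)) := by
      rw [← exp_add]; ring_nf
    simp only [g]
    rw [mul_rpow (inv_nonneg.2 hγ.le) hu.le, inv_rpow hγ.le, hexp]
    field_simp
  calc ∫ x in Ioi (b - 1), (1 + x) ^ (c - 1) * exp (-x / γ)
      = ∫ u in Ioi b, u ^ (c - 1) * exp (-(u - 1) / γ) := by
        rw [← sub_add_cancel b 1, ← setIntegral_Ioi_comp_add_right, add_sub_cancel_right]
        simp only [add_comm _ (1 : ℝ), add_sub_cancel_left]
    _ = ∫ u in Ioi b, exp (1 / γ) * γ ^ (c - 1) * g (γ⁻¹ * u) :=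
        setIntegral_congr_fun measurableSet_Ioi fun u hu => hscale u (hb.trans hu)
    _ = exp (1 / γ) * γ ^ (c - 1) * (γ * ∫ t in Ioi (b / γ), g t) := by
        rw [integral_const_mul, integral_comp_mul_left_Ioi g b (inv_pos.2 hγ), inv_inv,
          smul_eq_mul, inv_mul_eq_div]
    _ = exp (1 / γ) * γ ^ c * upperIncGamma c (b / γ) := by
        rw [upperIncGamma, rpow_sub_one hγ.ne']
        field_simp
        rfl

theorem integral_Ioc_one_add_rpow_mul_exp (c : ℝ) {γ b : ℝ} (hγ : 0 < γ) (hb : 1 ≤ b) :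
    ∫ x in Ioc 0 (b - 1), (1 + x) ^ (c - 1) * exp (-x / γ)
      = exp (1 / γ) * γ ^ c * (upperIncGamma c (1 / γ) - upperIncGamma c (b / γ)) := by
  have hint := integrableOn_Ioi_one_add_rpow_mul_exp (c - 1) hγ (by norm_num : (-1 : ℝ) < 0)
  have hsplit := setIntegral_union (Ioc_disjoint_Ioi le_rfl) measurableSet_Ioi
    (hint.mono_set Ioc_subset_Ioi_self) (hint.mono_set (Ioi_subset_Ioi (sub_nonneg.2 hb)))
  rw [Ioc_union_Ioi_eq_Ioi (sub_nonneg.2 hb), ← sub_self (1 : ℝ),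
    integral_Ioi_one_add_rpow_mul_exp c hγ one_pos, sub_self,
    integral_Ioi_one_add_rpow_mul_exp c hγ (by linarith)] at hsplit
  linear_combination -hsplit

theorem integrableOn_and_setIntegral_eq_sum {α ι E : Type*} [MeasurableSpace α] {μ : Measure α}
    [NormedAddCommGroup E] [NormedSpace ℝ E] {X : Set α} (hX : MeasurableSet X) {g : α → E}
    {f : ι → α → E} {t : Finset ι} (hf : ∀ i ∈ t, IntegrableOn (f i) X μ)
    (hg : EqOn g (fun x => ∑ i ∈ t, f i x) X) :
    IntegrableOn g X μ ∧ ∫ x in X, g x ∂μ = ∑ i ∈ t, ∫ x in X, f i x ∂μ :=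
  ⟨IntegrableOn.congr_fun (integrable_finsetSum t hf) hg.symm hX,
    by rw [setIntegral_congr_fun hX hg, integral_finsetSum t hf]⟩

theorem rpow_mul_altGeomSum_eq_sum_left {y : ℝ} (hy : 0 < y) (B s : ℝ) (N : ℕ) :
    y ^ (s - 2) * altGeomSum y B N = ∑ n ∈ range N, (-B) ^ n * y ^ (s - n - 2 - 1) := by
  rw [altGeomSum, Finset.mul_sum]
  refine Finset.sum_congr rfl fun n _ => ?_
  have : y ^ (s - n - 2 - 1) = y ^ (s - 2) / y ^ (n + 1) := by
    rw [← rpow_natCast, ← rpow_sub hy]; push_cast; ring_nf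
  rw [this, neg_pow B]
  field_simp

theorem rpow_mul_altGeomSum_eq_sum_right {y : ℝ} (hy : 0 < y) (A s : ℝ) (N : ℕ) :
    y ^ (s - 2) * altGeomSum A y N
      = ∑ n ∈ range N, (-1) ^ n / A ^ (n + 1) * y ^ (s + n - 1 - 1) := by
  rw [altGeomSum, Finset.mul_sum]
  refine Finset.sum_congr rfl fun n _ => ?_
  have : y ^ (s + n - 1 - 1) = y ^ (s - 2) * y ^ n := by
    rw [← rpow_natCast, ← rpow_add hy]; ring_nf
  rw [this]
  ring

noncomputable def truncatedIntegrand (a γ s : ℝ) (N : ℕ) (x : ℝ) : ℝ :=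
  (1 + x) ^ (s - 2) * exp (-x / γ) * altGeomSum (max (1 + x) (a - 1)) (min (1 + x) (a - 1)) N

section truncatedIntegrand

variable {a γ s : ℝ}

theorem truncatedIntegrand_Ioi {b : ℝ} (hγ : 0 < γ) (hb : 0 < b) (hab : a - 1 ≤ b) (N : ℕ) :
    IntegrableOn (truncatedIntegrand a γ s N) (Ioi (b - 1)) ∧
      ∫ x in Ioi (b - 1), truncatedIntegrand a γ s N x
        = exp (1 / γ) * ∑ n ∈ range N,
            (1 - a) ^ n * γ ^ (s - n - 2) * upperIncGamma (s - n - 2) (b / γ) := by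
  obtain ⟨hint, heq⟩ := integrableOn_and_setIntegral_eq_sum (X := Ioi (b - 1)) measurableSet_Ioi
    (g := truncatedIntegrand a γ s N) (t := Finset.range N)
    (f := fun (n : ℕ) x => (1 - a) ^ n * ((1 + x) ^ (s - n - 2 - 1) * exp (-x / γ)))
    (fun n _ => (integrableOn_Ioi_one_add_rpow_mul_exp _ hγ (by linarith)).const_mul _)
    (fun x hx => by
      have hx : b < 1 + x := by linarith [mem_Ioi.1 hx]
      rw [truncatedIntegrand, max_eq_left (by linarith), min_eq_right (by linarith),
        mul_right_comm, rpow_mul_altGeomSum_eq_sum_left (by linarith), Finset.sum_mul]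
      refine Finset.sum_congr rfl fun n _ => ?_
      rw [neg_sub]
      ring)
  refine ⟨hint, ?_⟩
  rw [heq, Finset.mul_sum]
  refine Finset.sum_congr rfl fun n _ => ?_
  rw [integral_const_mul, integral_Ioi_one_add_rpow_mul_exp _ hγ hb]
  ring

theorem truncatedIntegrand_Ioc (hγ : 0 < γ) (ha : 2 ≤ a) (N : ℕ) :
    IntegrableOn (truncatedIntegrand a γ s N) (Ioc 0 (a - 1 - 1)) ∧
      ∫ x in Ioc 0 (a - 1 - 1), truncatedIntegrand a γ s N x
        = exp (1 / γ) * ∑ n ∈ range N, (-1) ^ n * γ ^ (s + n - 1) / (a - 1) ^ (n + 1) *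
            (upperIncGamma (s + n - 1) (1 / γ) - upperIncGamma (s + n - 1) ((a - 1) / γ)) := by
  obtain ⟨hint, heq⟩ := integrableOn_and_setIntegral_eq_sum (X := Ioc 0 (a - 1 - 1))
    measurableSet_Ioc (g := truncatedIntegrand a γ s N) (t := Finset.range N)
    (f := fun (n : ℕ) x =>
      (-1) ^ n / (a - 1) ^ (n + 1) * ((1 + x) ^ (s + n - 1 - 1) * exp (-x / γ)))
    (fun n _ => ((integrableOn_Ioi_one_add_rpow_mul_exp _ hγ (by norm_num : (-1 : ℝ) < 0))
      |>.mono_set Ioc_subset_Ioi_self).const_mul _)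
    (fun x hx => by
      have hx0 : 0 < 1 + x := by linarith [hx.1]
      have hxa : 1 + x ≤ a - 1 := by linarith [hx.2]
      rw [truncatedIntegrand, max_eq_right hxa, min_eq_left hxa, mul_right_comm,
        rpow_mul_altGeomSum_eq_sum_right hx0, Finset.sum_mul]
      refine Finset.sum_congr rfl fun n _ => ?_
      ring)
  refine ⟨hint, ?_⟩
  rw [heq, Finset.mul_sum]
  refine Finset.sum_congr rfl fun n _ => ?_
  rw [integral_const_mul, integral_Ioc_one_add_rpow_mul_exp _ hγ (by linarith)]
  ring

theorem integrableOn_truncatedIntegrand (hγ : 0 < γ) (N : ℕ) :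
    IntegrableOn (truncatedIntegrand a γ s N) (Ioi 0) := by
  rcases le_or_gt a 2 with ha | ha
  · simpa using (truncatedIntegrand_Ioi (s := s) hγ one_pos (by linarith) N).1
  · rw [← Ioc_union_Ioi_eq_Ioi (by linarith : (0 : ℝ) ≤ a - 1 - 1)]
    exact (truncatedIntegrand_Ioc hγ ha.le N).1.union
      (truncatedIntegrand_Ioi (b := a - 1) hγ (by linarith) le_rfl N).1

theorem Psi_eq_integral_truncatedIntegrand (hγ : 0 < γ) (k : ℕ) :
    Psi a γ s k = ∫ x in Ioi 0, truncatedIntegrand a γ s (k + 1) x := by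
  rcases le_or_gt a 2 with ha | ha
  · rw [Psi, if_neg ha.not_gt, zero_add, max_eq_left (by linarith : a - 1 ≤ 1), ← sub_self 1,
      (truncatedIntegrand_Ioi hγ one_pos (by linarith) _).2]
  · have hIoc := truncatedIntegrand_Ioc (s := s) hγ ha.le (k + 1)
    have hIoi := truncatedIntegrand_Ioi (s := s) (b := a - 1) hγ (by linarith) le_rfl (k + 1)
    rw [Psi, if_pos ha, max_eq_right (by linarith : (1 : ℝ) ≤ a - 1), ← Ioc_union_Ioi_eq_Ioi
      (by linarith : (0 : ℝ) ≤ a - 1 - 1), setIntegral_union (Ioc_disjoint_Ioi le_rfl)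
      measurableSet_Ioi hIoc.1 hIoi.1, hIoc.2, hIoi.2, mul_add]

end truncatedIntegrand

section bounds

variable {a γ s x : ℝ}

theorem div_add_eq_mul_one_div_max_add_min :
    (1 + x) ^ (s - 2) / (a + x) * exp (-x / γ)
      = (1 + x) ^ (s - 2) * exp (-x / γ) *
          (1 / (max (1 + x) (a - 1) + min (1 + x) (a - 1))) := by
  rw [max_add_min]
  ring

theorem truncatedIntegrand_le_of_even (ha : 1 ≤ a) (hx : 0 < x) {N : ℕ} (hN : Even N) :
    truncatedIntegrand a γ s N x ≤ (1 + x) ^ (s - 2) / (a + x) * exp (-x / γ) := by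
  rw [div_add_eq_mul_one_div_max_add_min, truncatedIntegrand]
  exact mul_le_mul_of_nonneg_left (altGeomSum_le_one_div_add (lt_max_of_lt_left (by linarith))
    (le_min (by linarith) (by linarith)) hN) (by positivity)

theorem le_truncatedIntegrand_of_odd (ha : 1 ≤ a) (hx : 0 < x) {N : ℕ} (hN : Odd N) :
    (1 + x) ^ (s - 2) / (a + x) * exp (-x / γ) ≤ truncatedIntegrand a γ s N x := by
  rw [div_add_eq_mul_one_div_max_add_min, truncatedIntegrand]
  exact mul_le_mul_of_nonneg_left (one_div_add_le_altGeomSum (lt_max_of_lt_left (by linarith))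
    (le_min (by linarith) (by linarith)) hN) (by positivity)

theorem integrableOn_one_add_rpow_div_add_mul_exp (ha : 1 ≤ a) (hγ : 0 < γ) :
    IntegrableOn (fun x => (1 + x) ^ (s - 2) / (a + x) * exp (-x / γ)) (Ioi 0) := by
  refine (integrableOn_Ioi_one_add_rpow_mul_exp (s - 2) hγ (by norm_num)).mono'
    (by fun_prop : Measurable _).aestronglyMeasurable
    ((ae_restrict_iff' measurableSet_Ioi).2 (ae_of_all _ fun x (hx : 0 < x) => ?_))
  rw [norm_of_nonneg (by positivity), div_mul_eq_mul_div]
  exact div_le_self (by positivity) (by linarith)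

end bounds

theorem truncated_series_bounds_general (a γ s : ℝ) (ha : 1 < a) (hγ : 0 < γ)
    (k : ℕ) (hk : Even k) :
    Psi a γ s (k + 1)
        ≤ ∫ x in Ioi (0 : ℝ), (1 + x) ^ (s - 2) / (a + x) * Real.exp (-x / γ)
      ∧ ∫ x in Ioi (0 : ℝ), (1 + x) ^ (s - 2) / (a + x) * Real.exp (-x / γ)
        ≤ Psi a γ s k := by
  have hf := integrableOn_one_add_rpow_div_add_mul_exp (s := s) ha.le hγ
  rw [Psi_eq_integral_truncatedIntegrand hγ, Psi_eq_integral_truncatedIntegrand hγ]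
  exact ⟨setIntegral_mono_on (integrableOn_truncatedIntegrand hγ _) hf measurableSet_Ioi
      fun x hx => truncatedIntegrand_le_of_even ha.le hx hk.add_one.add_one,
    setIntegral_mono_on hf (integrableOn_truncatedIntegrand hγ _) measurableSet_Ioi
      fun x hx => le_truncatedIntegrand_of_odd ha.le hx hk.add_one⟩

theorem truncated_series_bounds (a γ s : ℝ) (ha : 1 < a) (hγ : 0 < γ) (hs : s < 1)
    (k : ℕ) (hk : Even k) :
    Psi a γ s (k + 1)
        ≤ ∫ x in Ioi (0 : ℝ), (1 + x) ^ (s - 2) / (a + x) * Real.exp (-x / γ)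
      ∧ ∫ x in Ioi (0 : ℝ), (1 + x) ^ (s - 2) / (a + x) * Real.exp (-x / γ)
        ≤ Psi a γ s k :=
  truncated_series_bounds_general a γ s ha hγ k hk
end

section
/- Let S₁(τ,t) and S₂(τ,t) be independent nonnegative bivariate processes and define the (min,×) convolution (S₁ ⊗ S₂)(τ,t) = min_{τ ≤ u ≤ t} S₁(τ,u)·S₂(u,t) over integer u. Then for s < 1, E[((S₁ ⊗ S₂)(τ,t))^{s−1}] ≤ ∑_{u=τ}^{t} E[S₁(τ,u)^{s−1}] · E[S₂(u,t)^{s−1}]. -/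
/-!
The minimum over the finite range `τ ≤ u ≤ t` is attained at some `u₀`, so its `(s - 1)`-th power
is one of the nonnegative terms `(S₁ τ u * S₂ u t) ^ (s - 1)` and hence at most their sum. Taking
expectations, independence factors each term as `E[S₁ τ u ^ (s - 1)] * E[S₂ u t ^ (s - 1)]`.
-/

open MeasureTheory ProbabilityTheory Finset

theorem Finset.comp_inf'_le_sum {ι α M : Type*} [LinearOrder α] [AddCommMonoid M] [PartialOrder M]
    [IsOrderedAddMonoid M] {s : Finset ι} (hs : s.Nonempty) (f : ι → α) (g : α → M)
    (hg : ∀ i ∈ s, 0 ≤ g (f i)) :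
    g (s.inf' hs f) ≤ ∑ i ∈ s, g (f i) := by
  obtain ⟨i, hi, hmin⟩ := exists_mem_eq_inf' hs f
  rw [hmin]
  exact single_le_sum hg hi

theorem integral_sum_mul_eq_sum_mul_integral {Ω ι : Type*} [MeasurableSpace Ω] {μ : Measure Ω}
    (s : Finset ι) {X Y : ι → Ω → ℝ} (hXY : ∀ i ∈ s, IndepFun (X i) (Y i) μ)
    (hX : ∀ i ∈ s, Integrable (X i) μ) (hY : ∀ i ∈ s, Integrable (Y i) μ) :
    ∫ ω, ∑ i ∈ s, X i ω * Y i ω ∂μ = ∑ i ∈ s, (∫ ω, X i ω ∂μ) * (∫ ω, Y i ω ∂μ) := by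
  rw [integral_finsetSum (f := fun i ω => X i ω * Y i ω) s fun i hi =>
    (hXY i hi).integrable_mul (hX i hi) (hY i hi)]
  exact sum_congr rfl fun i hi => (hXY i hi).integral_fun_mul_eq_mul_integral
    (hX i hi).aestronglyMeasurable (hY i hi).aestronglyMeasurable

theorem min_times_convolution_mellin_bound_general
    {Ω : Type*} [MeasurableSpace Ω] (P : Measure Ω)
    (S₁ S₂ : ℕ → ℕ → Ω → ℝ) (τ t : ℕ) (hτt : τ ≤ t)
    (hpos₁ : ∀ τ' t' ω, 0 < S₁ τ' t' ω) (hpos₂ : ∀ τ' t' ω, 0 < S₂ τ' t' ω)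
    (hindep : ∀ u, IndepFun (S₁ τ u) (S₂ u t) P)
    (s : ℝ)
    (hint₁ : ∀ u, Integrable (fun ω => S₁ τ u ω ^ (s - 1)) P)
    (hint₂ : ∀ u, Integrable (fun ω => S₂ u t ω ^ (s - 1)) P) :
    ∫ ω, ((Icc τ t).inf' (Finset.nonempty_Icc.mpr hτt)
          (fun u => S₁ τ u ω * S₂ u t ω)) ^ (s - 1) ∂P
      ≤ ∑ u ∈ Icc τ t,
          (∫ ω, S₁ τ u ω ^ (s - 1) ∂P) * (∫ ω, S₂ u t ω ^ (s - 1) ∂P) := by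
  have hindep_rpow (u : ℕ) :
      IndepFun (fun ω => S₁ τ u ω ^ (s - 1)) (fun ω => S₂ u t ω ^ (s - 1)) P :=
    (hindep u).comp (measurable_id.pow_const _) (measurable_id.pow_const _)
  have hprod_pos (u : ℕ) (ω : Ω) : 0 < S₁ τ u ω * S₂ u t ω := mul_pos (hpos₁ τ u ω) (hpos₂ u t ω)
  have hmin_le_sum (ω : Ω) :
      ((Icc τ t).inf' (nonempty_Icc.mpr hτt) fun u => S₁ τ u ω * S₂ u t ω) ^ (s - 1)
        ≤ ∑ u ∈ Icc τ t, S₁ τ u ω ^ (s - 1) * S₂ u t ω ^ (s - 1) :=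
    (comp_inf'_le_sum (nonempty_Icc.mpr hτt) _ (· ^ (s - 1)) fun u _ =>
      Real.rpow_nonneg (hprod_pos u ω).le _).trans_eq
      (sum_congr rfl fun u _ => Real.mul_rpow (hpos₁ τ u ω).le (hpos₂ u t ω).le)
  calc _ ≤ ∫ ω, ∑ u ∈ Icc τ t, S₁ τ u ω ^ (s - 1) * S₂ u t ω ^ (s - 1) ∂P := by
        refine integral_mono_of_nonneg (.of_forall fun ω => ?_) ?_ (.of_forall hmin_le_sum)
        · exact Real.rpow_nonneg (le_inf' _ _ fun u _ => (hprod_pos u ω).le) _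
        · exact integrable_finsetSum _ fun u _ =>
            (hindep_rpow u).integrable_mul (hint₁ u) (hint₂ u)
    _ = _ := integral_sum_mul_eq_sum_mul_integral _ (fun u _ => hindep_rpow u)
        (fun u _ => hint₁ u) (fun u _ => hint₂ u)

theorem min_times_convolution_mellin_bound
    {Ω : Type*} [MeasurableSpace Ω] (P : Measure Ω) [IsProbabilityMeasure P]
    (S₁ S₂ : ℕ → ℕ → Ω → ℝ) (τ t : ℕ) (hτt : τ ≤ t)
    (hmeas₁ : ∀ τ' t', Measurable (S₁ τ' t')) (hmeas₂ : ∀ τ' t', Measurable (S₂ τ' t'))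
    (hpos₁ : ∀ τ' t' ω, 0 < S₁ τ' t' ω) (hpos₂ : ∀ τ' t' ω, 0 < S₂ τ' t' ω)
    (hindep : ∀ u, IndepFun (S₁ τ u) (S₂ u t) P)
    (s : ℝ) (hs : s < 1)
    (hint₁ : ∀ u, Integrable (fun ω => S₁ τ u ω ^ (s - 1)) P)
    (hint₂ : ∀ u, Integrable (fun ω => S₂ u t ω ^ (s - 1)) P) :
    ∫ ω, ((Icc τ t).inf' (Finset.nonempty_Icc.mpr hτt)
          (fun u => S₁ τ u ω * S₂ u t ω)) ^ (s - 1) ∂P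
      ≤ ∑ u ∈ Icc τ t,
          (∫ ω, S₁ τ u ω ^ (s - 1) ∂P) * (∫ ω, S₂ u t ω ^ (s - 1) ∂P) :=
  min_times_convolution_mellin_bound_general P S₁ S₂ τ t hτt hpos₁ hpos₂ hindep s hint₁ hint₂
end

section
/- Let S₁,...,S_H be i.i.d. processes with S_j(τ,t) = ∏_{u=τ}^{t−1} g_u^{(j)} where the g_u^{(j)} are i.i.d. positive random variables with Mellin transform M(s) = E[g^{s−1}]. Then for s < 1, the Mellin transform of the (min,×) network convolution S_net = S₁ ⊗ ⋯ ⊗ S_H satisfies E[S_net(τ,t)^{s−1}] ≤ C(H−1+t−τ, t−τ) · M(s)^{t−τ}, where C(·,·) is the binomial coefficient. -/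
open MeasureTheory ProbabilityTheory Finset

/-! The infimum over the finitely many ways of splitting `[τ, t)` among the `H` channels is
attained, so its `(s - 1)`-th power is at most the sum of the `(s - 1)`-th powers over all
splittings. Each splitting uses exactly `t - τ` of the independent factors, so by independence each
summand has expectation `M ^ (t - τ)`. A splitting is determined by its increments, a weak
composition of `t - τ` into `H` parts, and there are `(H - 1 + (t - τ)).choose (t - τ)` of
those. -/

lemma Fin.sum_succ_sub_castSucc_of_monotone {n : ℕ} {u : Fin (n + 1) → ℕ} (hu : Monotone u) :
    ∑ j : Fin n, (u j.succ - u j.castSucc) = u (Fin.last n) - u 0 := by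
  induction n with
  | zero => simp
  | succ n ih =>
    have hle : u (Fin.last n).castSucc ≤ u (Fin.last (n + 1)) := hu (Fin.le_last _)
    have h0 : u 0 ≤ u (Fin.last n).castSucc := hu (Fin.zero_le _)
    have ih' := ih (u := u ∘ Fin.castSucc) (hu.comp Fin.strictMono_castSucc.monotone)
    simp only [Function.comp_apply, Fin.castSucc_zero] at ih'
    rw [Fin.sum_univ_castSucc]
    simp only [Fin.succ_castSucc, ih', Fin.succ_last, Nat.succ_eq_add_one]
    omega

namespace ProbabilityTheory

variable {Ω ι : Type*} {mΩ : MeasurableSpace Ω} {μ : Measure Ω} {X : ι → Ω → ℝ}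

lemma iIndepFun.integrable_finsetProd [IsFiniteMeasure μ] (hX : iIndepFun X μ)
    (hint : ∀ i, Integrable (X i) μ) (T : Finset ι) :
    Integrable (fun ω ↦ ∏ i ∈ T, X i ω) μ := by
  classical
  induction T using Finset.induction_on with
  | empty => simp
  | insert i T hi ih =>
    have hindep := hX.indepFun_finsetProd_of_notMem₀ (fun j ↦ (hint j).aemeasurable) hi
    simp only [prod_insert hi, mul_comm (X i _)]
    simpa only [Finset.prod_fn, Pi.mul_def] using
      hindep.integrable_mul (by simpa only [Finset.prod_fn] using ih) (hint i)

lemma iIndepFun.integral_finsetProd_eq_prod_integral (hX : iIndepFun X μ)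
    (hmeas : ∀ i, AEStronglyMeasurable (X i) μ) (T : Finset ι) :
    ∫ ω, ∏ i ∈ T, X i ω ∂μ = ∏ i ∈ T, ∫ ω, X i ω ∂μ := by
  simp only [← prod_coe_sort T]
  exact (hX.precomp Subtype.val_injective).integral_fun_prod_eq_prod_integral fun i ↦ hmeas i

variable {κ α : Type*} {Y : κ → α → Ω → ℝ}

lemma iIndepFun.integrable_prod_prod [IsFiniteMeasure μ]
    (hY : iIndepFun (fun p : κ × α ↦ Y p.1 p.2) μ) (hint : ∀ j v, Integrable (Y j v) μ)
    (s : Finset κ) (I : κ → Finset α) :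
    Integrable (fun ω ↦ ∏ j ∈ s, ∏ v ∈ I j, Y j v ω) μ := by
  simpa only [prod_sigma, Equiv.sigmaEquivProd_apply] using
    (hY.precomp (Equiv.sigmaEquivProd κ α).injective).integrable_finsetProd
      (fun p ↦ hint p.1 p.2) (s.sigma I)

lemma iIndepFun.integral_prod_prod_eq_pow (hY : iIndepFun (fun p : κ × α ↦ Y p.1 p.2) μ)
    (hmeas : ∀ j v, AEStronglyMeasurable (Y j v) μ) {M : ℝ}
    (hmean : ∀ j v, ∫ ω, Y j v ω ∂μ = M) (s : Finset κ) (I : κ → Finset α) :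
    ∫ ω, ∏ j ∈ s, ∏ v ∈ I j, Y j v ω ∂μ = M ^ ∑ j ∈ s, #(I j) := by
  have := (hY.precomp (Equiv.sigmaEquivProd κ α).injective).integral_finsetProd_eq_prod_integral
    (fun p ↦ hmeas p.1 p.2) (s.sigma I)
  simpa only [prod_sigma, Function.comp_apply, Equiv.sigmaEquivProd_apply, hmean, prod_const,
    card_sigma] using this

end ProbabilityTheory

lemma Real.rpow_ciInf_le_sum {ι : Type*} [Fintype ι] [Nonempty ι] {f : ι → ℝ}
    (hf : ∀ i, 0 ≤ f i) (r : ℝ) : (⨅ i, f i) ^ r ≤ ∑ i, f i ^ r := by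
  obtain ⟨i, hi⟩ := exists_eq_ciInf_of_finite (f := f)
  rw [← hi]
  exact single_le_sum (fun j _ ↦ Real.rpow_nonneg (hf j) r) (mem_univ i)

lemma MeasureTheory.integral_rpow_ciInf_le_sum {Ω ι : Type*} [MeasurableSpace Ω]
    {μ : Measure Ω} [Fintype ι] [Nonempty ι] {F : ι → Ω → ℝ} (hF : ∀ i ω, 0 ≤ F i ω)
    {r : ℝ} (hint : ∀ i, Integrable (fun ω ↦ F i ω ^ r) μ) :
    ∫ ω, (⨅ i, F i ω) ^ r ∂μ ≤ ∑ i, ∫ ω, F i ω ^ r ∂μ := by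
  rw [← integral_finsetSum _ fun i _ ↦ hint i]
  exact integral_mono_of_nonneg (ae_of_all _ fun ω ↦ Real.rpow_nonneg (le_ciInf (hF · ω)) r)
    (integrable_finsetSum _ fun i _ ↦ hint i)
    (ae_of_all _ fun ω ↦ Real.rpow_ciInf_le_sum (hF · ω) r)

instance {α : Type*} [Fintype α] [DecidableEq α] (n : ℕ) :
    Finite {d : α → ℕ // ∑ i, d i = n} :=
  .of_equiv _ (Sym.equivNatSumOfFintype α n)

/-- The splitting points of `[τ, t)` in the iterated convolution `S₁ ⊗ ⋯ ⊗ S_H`. -/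
abbrev ConvolutionPath (H τ t : ℕ) : Type :=
  {u : Fin (H + 1) → ℕ // Monotone u ∧ u 0 = τ ∧ u (Fin.last H) = t}

namespace ConvolutionPath

variable {H τ t : ℕ}

lemma nonempty (hH : 1 ≤ H) (hτt : τ ≤ t) : Nonempty (ConvolutionPath H τ t) := by
  have hlast : Fin.last H ≠ 0 := by simp [Fin.ext_iff]; omega
  refine ⟨fun j ↦ if j = 0 then τ else t, fun a b hab ↦ ?_, by simp, by simp [hlast]⟩
  dsimp only
  split_ifs with ha hb hb
  · exact le_rfl
  · exact hτt
  · exact absurd (Fin.le_zero_iff.mp (hb ▸ hab)) ha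
  · exact le_rfl

def increments (u : ConvolutionPath H τ t) (j : Fin H) : ℕ := u.1 j.succ - u.1 j.castSucc

lemma sum_increments (u : ConvolutionPath H τ t) : ∑ j, u.increments j = t - τ :=
  (Fin.sum_succ_sub_castSucc_of_monotone u.2.1).trans (by rw [u.2.2.1, u.2.2.2])

lemma increments_injective :
    Function.Injective (increments : ConvolutionPath H τ t → Fin H → ℕ) := by
  intro u u' h
  refine Subtype.ext (funext fun j ↦ ?_)
  induction j using Fin.induction with
  | zero => rw [u.2.2.1, u'.2.2.1]
  | succ j ih =>
    have hj := congrFun h j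
    have hu := u.2.1 (Fin.castSucc_le_succ j)
    have hu' := u'.2.1 (Fin.castSucc_le_succ j)
    simp only [increments] at hj
    omega

def toComposition (u : ConvolutionPath H τ t) : {d : Fin H → ℕ // ∑ j, d j = t - τ} :=
  ⟨u.increments, u.sum_increments⟩

lemma toComposition_injective : Function.Injective (toComposition : ConvolutionPath H τ t → _) :=
  fun _ _ h ↦ increments_injective (congrArg Subtype.val h)

instance : Finite (ConvolutionPath H τ t) :=
  Finite.of_injective _ toComposition_injective

lemma card_le : Nat.card (ConvolutionPath H τ t) ≤ (H - 1 + (t - τ)).choose (t - τ) :=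
  calc Nat.card (ConvolutionPath H τ t)
      ≤ Nat.card {d : Fin H → ℕ // ∑ j, d j = t - τ} :=
        Nat.card_le_card_of_injective _ toComposition_injective
    _ = Nat.card (Sym (Fin H) (t - τ)) := Nat.card_congr (Sym.equivNatSumOfFintype _ _).symm
    _ = (H + (t - τ) - 1).choose (t - τ) := by
        rw [Nat.card_eq_fintype_card, Sym.card_sym_eq_multichoose, Fintype.card_fin,
          Nat.multichoose_eq]
    _ ≤ (H - 1 + (t - τ)).choose (t - τ) := Nat.choose_le_choose _ (by omega)

end ConvolutionPath

theorem network_convolution_mellin_bound_general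
    {Ω : Type*} [MeasurableSpace Ω] (P : Measure Ω) [IsProbabilityMeasure P]
    (H : ℕ) (hH : 1 ≤ H) (g : Fin H → ℕ → Ω → ℝ)
    (hpos : ∀ j v ω, 0 < g j v ω)
    (hindep : iIndepFun (fun p : Fin H × ℕ => g p.1 p.2) P)
    (s : ℝ) (M : ℝ)
    (hint : ∀ j v, Integrable (fun ω => g j v ω ^ (s - 1)) P)
    (hMellin : ∀ j v, ∫ ω, g j v ω ^ (s - 1) ∂P = M)
    (τ t : ℕ) (hτt : τ ≤ t) :
    ∫ ω,
        (⨅ u : {u : Fin (H + 1) → ℕ // Monotone u ∧ u 0 = τ ∧ u (Fin.last H) = t},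
            ∏ j : Fin H, ∏ v ∈ Ico (u.1 j.castSucc) (u.1 j.succ), g j v ω) ^ (s - 1) ∂P
      ≤ (H - 1 + (t - τ)).choose (t - τ) * M ^ (t - τ) := by
  have := ConvolutionPath.nonempty hH hτt
  have := Fintype.ofFinite (ConvolutionPath H τ t)
  have hM : 0 ≤ M :=
    hMellin ⟨0, hH⟩ 0 ▸ integral_nonneg fun ω ↦ Real.rpow_nonneg (hpos _ _ ω).le _
  have hY : iIndepFun (fun p : Fin H × ℕ ↦ fun ω ↦ g p.1 p.2 ω ^ (s - 1)) P :=
    hindep.comp (fun _ x ↦ x ^ (s - 1)) fun _ ↦ by fun_prop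
  have hF_rpow (u : ConvolutionPath H τ t) ω :
      (∏ j, ∏ v ∈ Ico (u.1 j.castSucc) (u.1 j.succ), g j v ω) ^ (s - 1) =
        ∏ j, ∏ v ∈ Ico (u.1 j.castSucc) (u.1 j.succ), g j v ω ^ (s - 1) := by
    rw [← Real.finsetProd_rpow _ _ fun j _ ↦ prod_nonneg fun v _ ↦ (hpos j v ω).le]
    exact prod_congr rfl fun j _ ↦
      (Real.finsetProd_rpow _ _ (fun v _ ↦ (hpos j v ω).le) _).symm
  calc _ ≤ ∑ u : ConvolutionPath H τ t,
          ∫ ω, (∏ j, ∏ v ∈ Ico (u.1 j.castSucc) (u.1 j.succ), g j v ω) ^ (s - 1) ∂P :=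
        integral_rpow_ciInf_le_sum (fun u ω ↦ prod_nonneg fun j _ ↦ prod_nonneg fun v _ ↦
          (hpos j v ω).le) fun u ↦ by simpa only [hF_rpow] using hY.integrable_prod_prod hint _ _
    _ = ∑ _u : ConvolutionPath H τ t, M ^ (t - τ) := sum_congr rfl fun u _ ↦ by
        simp only [hF_rpow, hY.integral_prod_prod_eq_pow (fun j v ↦ (hint j v).1) hMellin,
          Nat.card_Ico]
        exact congrArg (M ^ ·) u.sum_increments
    _ ≤ (H - 1 + (t - τ)).choose (t - τ) * M ^ (t - τ) := by
        rw [sum_const, card_univ, nsmul_eq_mul, ← Nat.card_eq_fintype_card]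
        gcongr
        exact ConvolutionPath.card_le

theorem network_convolution_mellin_bound
    {Ω : Type*} [MeasurableSpace Ω] (P : Measure Ω) [IsProbabilityMeasure P]
    (H : ℕ) (hH : 1 ≤ H) (g : Fin H → ℕ → Ω → ℝ)
    (hmeas : ∀ j v, Measurable (g j v)) (hpos : ∀ j v ω, 0 < g j v ω)
    (hindep : iIndepFun (fun p : Fin H × ℕ => g p.1 p.2) P)
    (s : ℝ) (hs : s < 1) (M : ℝ)
    (hint : ∀ j v, Integrable (fun ω => g j v ω ^ (s - 1)) P)
    (hMellin : ∀ j v, ∫ ω, g j v ω ^ (s - 1) ∂P = M)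
    (τ t : ℕ) (hτt : τ ≤ t) :
    ∫ ω,
        (⨅ u : {u : Fin (H + 1) → ℕ // Monotone u ∧ u 0 = τ ∧ u (Fin.last H) = t},
            ∏ j : Fin H, ∏ v ∈ Ico (u.1 j.castSucc) (u.1 j.succ), g j v ω) ^ (s - 1) ∂P
      ≤ (H - 1 + (t - τ)).choose (t - τ) * M ^ (t - τ) :=
  network_convolution_mellin_bound_general P H hH g hpos hindep s M hint hMellin τ t hτt
end
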